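/- For every φ ∈ D, every λ ∈ ℝ, and every Borel set X ⊆ ℝ, one has Σ_{α ∈ {+1,−1}} ∫_X |∫_ℝ conj(ψ_{t,α}(p)) · exp(−i λ p²/2) · φ(p) dp|² dt = Σ_{α ∈ {+1,−1}} ∫_{X − λ} |φ̂(t, α)|² dt, where X − λ = {x − λ : x ∈ X}. Equivalently, the POV-measure τ built from the ψ_{t,α} forms a covariance system with the unitary group U(λ) of multiplication by exp(−i λ p²/2): ⟨U(−λ)φ, τ(X) U(−λ)φ⟩ = ⟨φ, τ(X − λ) φ⟩. -/
import Mathlib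


open MeasureTheory Complex
open scoped ComplexConjugate

noncomputable section

/-- The clock domain `D`: smooth functions with compact support contained in `ℝ \ {0}`. -/
def ClockDomain (φ : ℝ → ℂ) : Prop :=
  ContDiff ℝ (⊤ : ℕ∞) φ ∧ HasCompactSupport φ ∧ (0 : ℝ) ∉ tsupport φ

/-- The weak eigenfunctions of the time operator:
`ψ_{t,α}(p) = (2π)^{-1/2} θ(αp) √|p| exp(-i t p²/2)`, with `θ` the Heaviside function. -/
def timeEigenfun (t α p : ℝ) : ℂ :=
  ((Real.sqrt (2 * Real.pi))⁻¹ : ℝ) * (if 0 < α * p then 1 else 0) *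
    (Real.sqrt |p| : ℝ) * Complex.exp (-Complex.I * (t : ℂ) * (p : ℂ) ^ 2 / 2)

/-- The generalized "time transform" `φ̂(t, α) = ⟨ψ_{t,α}, φ⟩ = ∫ conj(ψ_{t,α}(p)) φ(p) dp`. -/
def timeTransform (φ : ℝ → ℂ) (t α : ℝ) : ℂ :=
  ∫ p : ℝ, conj (timeEigenfun t α p) * φ p

/-- The time operator `T = i(2p)⁻¹ d/dp + i d/dp (2p)⁻¹` in the momentum representation:
`(Tφ)(p) = (i/p) φ'(p) - (i/(2p²)) φ(p)`. -/
def timeOp (φ : ℝ → ℂ) (p : ℝ) : ℂ :=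
  (Complex.I / (p : ℂ)) * deriv φ p - (Complex.I / (2 * (p : ℂ) ^ 2)) * φ p

/-- The free Hamiltonian `H = p²/2` in the momentum representation. -/
def hamOp (φ : ℝ → ℂ) (p : ℝ) : ℂ := ((p : ℂ) ^ 2 / 2) * φ p

end

lemma timeEigen_shift (t l α p : ℝ) :
    conj (timeEigenfun t α p) * Complex.exp (-Complex.I * (l : ℂ) * (p : ℂ) ^ 2 / 2) =
      conj (timeEigenfun (t - l) α p) := by
  have h1 : conj ((if 0 < α * p then (1 : ℂ) else 0)) = if 0 < α * p then 1 else 0 := by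
    split <;> simp
  simp only [timeEigenfun, map_mul, h1, Complex.conj_ofReal, ← Complex.exp_conj,
    map_div₀, map_neg, Complex.conj_I, map_pow, map_ofNat]
  rw [mul_assoc, ← Complex.exp_add]
  congr 1
  push_cast
  ring

/-- **Covariance of the time POV-measure with respect to time translations.**
For `φ ∈ D`, `λ ∈ ℝ` and Borel `X ⊆ ℝ`, the time transform of `U(λ)φ = exp(-iλp²/2)φ`
has total `X`-mass equal to the `(X - λ)`-mass of the time transform of `φ`:
`⟨U(-λ)φ, τ(X) U(-λ)φ⟩ = ⟨φ, τ(X - λ) φ⟩`. -/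
theorem timePOV_covariant (φ : ℝ → ℂ) (hφ : ClockDomain φ) (l : ℝ)
    (X : Set ℝ) (hX : MeasurableSet X) :
    ((∫ t in X, ‖∫ p : ℝ, conj (timeEigenfun t 1 p) *
        (Complex.exp (-Complex.I * (l : ℂ) * (p : ℂ) ^ 2 / 2) * φ p)‖ ^ 2) +
      ∫ t in X, ‖∫ p : ℝ, conj (timeEigenfun t (-1) p) *
        (Complex.exp (-Complex.I * (l : ℂ) * (p : ℂ) ^ 2 / 2) * φ p)‖ ^ 2) =
    (∫ t in (fun x : ℝ => x - l) '' X, ‖timeTransform φ t 1‖ ^ 2) +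
      ∫ t in (fun x : ℝ => x - l) '' X, ‖timeTransform φ t (-1)‖ ^ 2 := by
  have hemb : MeasurableEmbedding (fun x : ℝ => x - l) :=
    (MeasurableEquiv.subRight l).measurableEmbedding
  have hmp : MeasurePreserving (fun x : ℝ => x - l) (volume : Measure ℝ) volume :=
    measurePreserving_sub_right volume l
  have hx : ∀ (t α : ℝ), (∫ p : ℝ, conj (timeEigenfun t α p) *
      (Complex.exp (-Complex.I * (l : ℂ) * (p : ℂ) ^ 2 / 2) * φ p)) =
      timeTransform φ (t - l) α := by
    intro t α
    unfold timeTransform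
    congr 1
    funext p
    rw [← mul_assoc, timeEigen_shift]
  rw [hmp.setIntegral_image_emb hemb (fun t => ‖timeTransform φ t 1‖ ^ 2) X,
    hmp.setIntegral_image_emb hemb (fun t => ‖timeTransform φ t (-1)‖ ^ 2) X]
  simp only [hx]
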